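/- Let R be an algebraic curvature tensor on ℝⁿ and let κ be a real constant. Define S_{ijkl} = R_{ijkl} - κ(g_{ik}g_{jl} - g_{il}g_{jk}) where g is the standard inner product, and define Q(T)_{ijkl} = Σ_{p,q} T_{ijpq}T_{klpq} + 2Σ_{p,q} T_{ipkq}T_{jplq} - 2Σ_{p,q} T_{iplq}T_{jpkq}. If R is Einstein with Ric_{ij} = (n-1)g_{ij}, then Q(S)_{ijkl} = Q(R)_{ijkl} + 2(n-1)κ(κ-2)(g_{ik}g_{jl} - g_{il}g_{jk}). -/
import Mathlib


/-- Hamilton's quadratic curvature term Q(T). -/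
def Qop (n : ℕ) (T : Fin n → Fin n → Fin n → Fin n → ℝ) (i j k l : Fin n) : ℝ :=
  (∑ p, ∑ q, T i j p q * T k l p q)
    + 2 * (∑ p, ∑ q, T i p k q * T j p l q)
    - 2 * (∑ p, ∑ q, T i p l q * T j p k q)

/-- The standard inner product components g_{ij} = δ_{ij}. -/
def gdelta (n : ℕ) (i j : Fin n) : ℝ := if i = j then 1 else 0

lemma eFG2 (n : ℕ) (T : Fin n → Fin n → Fin n → Fin n → ℝ) (i j k l : Fin n) :
    ∑ p, ∑ q, T i j p q * (gdelta n k p * gdelta n l q - gdelta n k q * gdelta n l p)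
      = T i j k l - T i j l k := by
  simp [gdelta, mul_sub, Finset.sum_sub_distrib, mul_comm, mul_assoc, mul_ite, ite_mul]

lemma eGF2 (n : ℕ) (T : Fin n → Fin n → Fin n → Fin n → ℝ) (i j k l : Fin n) :
    ∑ p, ∑ q, (gdelta n i p * gdelta n j q - gdelta n i q * gdelta n j p) * T k l p q
      = T k l i j - T k l j i := by
  have h : ∀ p q : Fin n,
      (gdelta n i p * gdelta n j q - gdelta n i q * gdelta n j p) * T k l p q
        = T k l p q * (gdelta n i p * gdelta n j q - gdelta n i q * gdelta n j p) :=
    fun p q => mul_comm _ _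
  simp only [h]
  exact eFG2 n T k l i j

lemma eFG (n : ℕ) (T : Fin n → Fin n → Fin n → Fin n → ℝ) (x y a b : Fin n) :
    ∑ p, ∑ q, T x p y q * (gdelta n a b * gdelta n p q - gdelta n a q * gdelta n p b)
      = gdelta n a b * (∑ p, T x p y p) - T x b y a := by
  simp [gdelta, mul_sub, Finset.sum_sub_distrib, Finset.mul_sum, mul_ite, ite_mul]

lemma eGF (n : ℕ) (T : Fin n → Fin n → Fin n → Fin n → ℝ) (x y a b : Fin n) :
    ∑ p, ∑ q, (gdelta n a b * gdelta n p q - gdelta n a q * gdelta n p b) * T x p y q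
      = gdelta n a b * (∑ p, T x p y p) - T x b y a := by
  simp [gdelta, sub_mul, Finset.sum_sub_distrib, Finset.mul_sum, mul_ite, ite_mul]

lemma eGG_A (n : ℕ) (i j k l : Fin n) :
    ∑ p, ∑ q, (gdelta n i p * gdelta n j q - gdelta n i q * gdelta n j p)
        * (gdelta n k p * gdelta n l q - gdelta n k q * gdelta n l p)
      = 2 * (gdelta n i k * gdelta n j l - gdelta n i l * gdelta n j k) := by
  simp only [gdelta, mul_sub, sub_mul, Finset.sum_sub_distrib, mul_ite, ite_mul,
    mul_one, mul_zero, one_mul, zero_mul]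
  simp
  split_ifs <;> subst_vars <;> simp_all <;> ring

lemma eGG_B (n : ℕ) (a b c d : Fin n) :
    ∑ p, ∑ q, (gdelta n a b * gdelta n p q - gdelta n a q * gdelta n p b)
        * (gdelta n c d * gdelta n p q - gdelta n c q * gdelta n p d)
      = ((n : ℝ) - 2) * (gdelta n a b * gdelta n c d) + gdelta n a c * gdelta n b d := by
  simp only [gdelta, mul_sub, sub_mul, Finset.sum_sub_distrib, mul_ite, ite_mul,
    mul_one, mul_zero, one_mul, zero_mul]
  simp
  split_ifs <;> subst_vars <;> simp_all <;> ring

/-- If R is Einstein with Ric = (n-1)g and S = R - κ(g∧g), then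
Q(S) = Q(R) + 2(n-1)κ(κ-2)(g_{ik}g_{jl} - g_{il}g_{jk}). -/
theorem stmt_6 (n : ℕ) (κ : ℝ) (R : Fin n → Fin n → Fin n → Fin n → ℝ)
    (hanti1 : ∀ i j k l, R i j k l = - R j i k l)
    (hanti2 : ∀ i j k l, R i j k l = - R i j l k)
    (hpair : ∀ i j k l, R i j k l = R k l i j)
    (hbianchi : ∀ i j k l, R i j k l + R j k i l + R k i j l = 0)
    (hEinstein : ∀ i j, (∑ k, R i k j k) = ((n : ℝ) - 1) * gdelta n i j) :
    ∀ i j k l, Qop n (fun i j k l => R i j k l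
        - κ * (gdelta n i k * gdelta n j l - gdelta n i l * gdelta n j k)) i j k l
      = Qop n R i j k l
        + 2 * ((n : ℝ) - 1) * κ * (κ - 2)
          * (gdelta n i k * gdelta n j l - gdelta n i l * gdelta n j k) := by
  intro i j k l
  have hA : ∑ p, ∑ q,
      (R i j p q - κ * (gdelta n i p * gdelta n j q - gdelta n i q * gdelta n j p))
        * (R k l p q - κ * (gdelta n k p * gdelta n l q - gdelta n k q * gdelta n l p))
      = (∑ p, ∑ q, R i j p q * R k l p q)
          - κ * (R i j k l - R i j l k) - κ * (R k l i j - R k l j i)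
          + κ ^ 2 * (2 * (gdelta n i k * gdelta n j l - gdelta n i l * gdelta n j k)) := by
    have eA : ∀ p q : Fin n,
        (R i j p q - κ * (gdelta n i p * gdelta n j q - gdelta n i q * gdelta n j p))
          * (R k l p q - κ * (gdelta n k p * gdelta n l q - gdelta n k q * gdelta n l p))
        = R i j p q * R k l p q
          - κ * (R i j p q * (gdelta n k p * gdelta n l q - gdelta n k q * gdelta n l p))
          - κ * ((gdelta n i p * gdelta n j q - gdelta n i q * gdelta n j p) * R k l p q)
          + κ ^ 2 * ((gdelta n i p * gdelta n j q - gdelta n i q * gdelta n j p)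
              * (gdelta n k p * gdelta n l q - gdelta n k q * gdelta n l p)) :=
      fun p q => by ring
    simp only [eA, Finset.sum_add_distrib, Finset.sum_sub_distrib, ← Finset.mul_sum]
    rw [eFG2 n R i j k l, eGF2 n R i j k l, eGG_A n i j k l]
  have hB : ∑ p, ∑ q,
      (R i p k q - κ * (gdelta n i k * gdelta n p q - gdelta n i q * gdelta n p k))
        * (R j p l q - κ * (gdelta n j l * gdelta n p q - gdelta n j q * gdelta n p l))
      = (∑ p, ∑ q, R i p k q * R j p l q)
          - κ * (gdelta n j l * (∑ p, R i p k p) - R i l k j)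
          - κ * (gdelta n i k * (∑ p, R j p l p) - R j k l i)
          + κ ^ 2 * (((n : ℝ) - 2) * (gdelta n i k * gdelta n j l)
              + gdelta n i j * gdelta n k l) := by
    have eB : ∀ p q : Fin n,
        (R i p k q - κ * (gdelta n i k * gdelta n p q - gdelta n i q * gdelta n p k))
          * (R j p l q - κ * (gdelta n j l * gdelta n p q - gdelta n j q * gdelta n p l))
        = R i p k q * R j p l q
          - κ * (R i p k q * (gdelta n j l * gdelta n p q - gdelta n j q * gdelta n p l))
          - κ * ((gdelta n i k * gdelta n p q - gdelta n i q * gdelta n p k) * R j p l q)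
          + κ ^ 2 * ((gdelta n i k * gdelta n p q - gdelta n i q * gdelta n p k)
              * (gdelta n j l * gdelta n p q - gdelta n j q * gdelta n p l)) :=
      fun p q => by ring
    simp only [eB, Finset.sum_add_distrib, Finset.sum_sub_distrib, ← Finset.mul_sum]
    rw [eFG n R i k j l, eGF n R j l i k, eGG_B n i k j l]
  have hC : ∑ p, ∑ q,
      (R i p l q - κ * (gdelta n i l * gdelta n p q - gdelta n i q * gdelta n p l))
        * (R j p k q - κ * (gdelta n j k * gdelta n p q - gdelta n j q * gdelta n p k))
      = (∑ p, ∑ q, R i p l q * R j p k q)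
          - κ * (gdelta n j k * (∑ p, R i p l p) - R i k l j)
          - κ * (gdelta n i l * (∑ p, R j p k p) - R j l k i)
          + κ ^ 2 * (((n : ℝ) - 2) * (gdelta n i l * gdelta n j k)
              + gdelta n i j * gdelta n l k) := by
    have eC : ∀ p q : Fin n,
        (R i p l q - κ * (gdelta n i l * gdelta n p q - gdelta n i q * gdelta n p l))
          * (R j p k q - κ * (gdelta n j k * gdelta n p q - gdelta n j q * gdelta n p k))
        = R i p l q * R j p k q
          - κ * (R i p l q * (gdelta n j k * gdelta n p q - gdelta n j q * gdelta n p k))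
          - κ * ((gdelta n i l * gdelta n p q - gdelta n i q * gdelta n p l) * R j p k q)
          + κ ^ 2 * ((gdelta n i l * gdelta n p q - gdelta n i q * gdelta n p l)
              * (gdelta n j k * gdelta n p q - gdelta n j q * gdelta n p k)) :=
      fun p q => by ring
    simp only [eC, Finset.sum_add_distrib, Finset.sum_sub_distrib, ← Finset.mul_sum]
    rw [eFG n R i l j k, eGF n R j k i l, eGG_B n i l j k]
  have hE1 : (∑ p, R i p k p) = ((n : ℝ) - 1) * gdelta n i k := hEinstein i k
  have hE2 : (∑ p, R j p l p) = ((n : ℝ) - 1) * gdelta n j l := hEinstein j l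
  have hE3 : (∑ p, R i p l p) = ((n : ℝ) - 1) * gdelta n i l := hEinstein i l
  have hE4 : (∑ p, R j p k p) = ((n : ℝ) - 1) * gdelta n j k := hEinstein j k
  have fg : gdelta n l k = gdelta n k l := by simp [gdelta, eq_comm]
  have f1 : R i j l k = - R i j k l := by linarith [hanti2 i j k l]
  have f2 : R k l i j = R i j k l := (hpair i j k l).symm
  have f3 : R k l j i = - R i j k l := by linarith [hpair j i k l, hanti1 i j k l]
  have f4 : R j k l i = R i l k j := by
    linarith [hpair j k l i, hanti1 i l j k, hanti2 i l j k]
  have f5 : R j l k i = R i k l j := by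
    linarith [hpair j l k i, hanti1 i k j l, hanti2 i k j l]
  have f6 : R i l k j - R i k l j = R i j k l := by
    linarith [hbianchi i k l j, hpair i j k l, hanti1 i l k j]
  simp only [Qop]
  rw [hA, hB, hC]
  linear_combination κ * f1 - κ * f2 + κ * f3 + 2 * κ * f4 - 2 * κ * f5 + 4 * κ * f6
    - 2 * κ * gdelta n j l * hE1 - 2 * κ * gdelta n i k * hE2
    + 2 * κ * gdelta n j k * hE3 + 2 * κ * gdelta n i l * hE4
    - 2 * κ ^ 2 * gdelta n i j * fg
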